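/- arXiv:1610.04550 — 2 statements merged into one kernel-verified Lean document; each statement's English description precedes it below -/
import Mathlib

section
/- Consider the discrete-time linear system x[t+1] = A x[t] + B w[t] on ℝ^n with fixed initial state x̄₀, where A is invertible and w[0], w[1], … are i.i.d. with a log-concave probability density ψ_w on ℝ^p. Then for every τ ≥ 1, the topological support of the distribution of the random state x[τ] is a convex subset of ℝ^n. -/
/-!
`x τ` is an affine function of the noise vector `(w 0, …, w (τ - 1))`, whose law is the `τ`-fold
product of the noise law `μ`. The support of a pushforward under a continuous map is the closure
of the image of the support, and the support of a product measure is the product of the supports,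
so it suffices that the support of `μ` is convex. A log-concave density is quasiconcave, hence
null-measurable, so the support of `μ` is that of Lebesgue measure restricted to the convex set
`{ψ > 0}`: empty if this set has empty interior (its frontier is null), its closure otherwise.
-/

open MeasureTheory Matrix ProbabilityTheory

def LogConcaveFun {m : ℕ} (f : (Fin m → ℝ) → ℝ) : Prop :=
  ∀ x y : Fin m → ℝ, ∀ l : ℝ, 0 ≤ l → l ≤ 1 →
    f x ^ l * f y ^ (1 - l) ≤ f (l • x + (1 - l) • y)

/-- Equivalently, for a Borel probability measure on `ℝⁿ`, the smallest closed set of full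
measure. -/
def measSupport {E : Type*} [TopologicalSpace E] [MeasurableSpace E] (μ : Measure E) : Set E :=
  {x | ∀ U : Set E, IsOpen U → x ∈ U → 0 < μ U}

open Set

lemma measSupport_eq_support {E : Type*} [TopologicalSpace E] [MeasurableSpace E]
    (μ : Measure E) : measSupport μ = μ.support := by
  ext x
  simp only [measSupport, Measure.support_eq_forall_isOpen, mem_ofPred_eq]
  exact forall_congr' fun U => forall_comm

namespace MeasureTheory.Measure

lemma support_map {X Y : Type*} [TopologicalSpace X] [MeasurableSpace X]
    [OpensMeasurableSpace X] [HereditarilyLindelofSpace X]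
    [TopologicalSpace Y] [MeasurableSpace Y] [BorelSpace Y]
    (μ : Measure X) {f : X → Y} (hf : Continuous f) :
    (μ.map f).support = closure (f '' μ.support) := by
  apply subset_antisymm
  · refine support_subset_of_isClosed isClosed_closure ?_
    rw [mem_ae_map_iff hf.measurable.aemeasurable isClosed_closure.measurableSet]
    exact Filter.mem_of_superset support_mem_ae fun z hz => subset_closure (mem_image_of_mem f hz)
  · refine closure_minimal (image_subset_iff.mpr fun z hz => ?_) isClosed_support
    rw [mem_preimage, mem_support_iff_forall] at *
    exact fun U hU => (hz _ (hf.continuousAt.preimage_mem_nhds hU)).trans_le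
      (le_map_apply hf.measurable.aemeasurable U)

lemma support_pi {ι : Type*} [Fintype ι] {X : ι → Type*} [∀ i, TopologicalSpace (X i)]
    [∀ i, MeasurableSpace (X i)] (μ : ∀ i, Measure (X i)) [∀ i, SigmaFinite (μ i)] :
    (Measure.pi μ).support = univ.pi fun i => (μ i).support := by
  ext v
  simp only [mem_univ_pi, mem_support_iff_forall, pos_iff_ne_zero]
  constructor
  · intro hv i U hU hμU
    exact hv _ ((continuous_apply i).continuousAt.preimage_mem_nhds hU)
      (pi_eval_preimage_null μ hμU)
  · intro hv U hU hμU
    rw [nhds_pi, Filter.mem_pi'] at hU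
    obtain ⟨I, t, ht, htU⟩ := hU
    have : Measure.pi μ (univ.pi t) = 0 :=
      measure_mono_null ((pi_mono' (fun _ _ => subset_rfl) (subset_univ _)).trans htU) hμU
    rw [pi_pi, Finset.prod_eq_zero_iff] at this
    obtain ⟨i, -, hi⟩ := this
    exact hv i _ (ht i) hi

lemma support_withDensity {X : Type*} [TopologicalSpace X] [MeasurableSpace X]
    [OpensMeasurableSpace X] (μ : Measure X) {f : X → ENNReal} (hf : AEMeasurable f μ) :
    (μ.withDensity f).support = (μ.restrict (Function.support f)).support := by
  ext x
  simp only [support_eq_forall_isOpen, mem_ofPred_eq, pos_iff_ne_zero]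
  refine forall₃_congr fun U _ hU => not_congr ?_
  rw [withDensity_apply_eq_zero' hf, restrict_apply hU.measurableSet, inter_comm]
  rfl

end MeasureTheory.Measure

section FiniteDimensional

variable {E : Type*} [NormedAddCommGroup E] [NormedSpace ℝ E] [MeasurableSpace E] [BorelSpace E]
  [FiniteDimensional ℝ E] (μ : Measure E) [μ.IsAddHaarMeasure]

lemma Convex.support_restrict {s : Set E} (hs : Convex ℝ s) : Convex ℝ (μ.restrict s).support := by
  rcases (interior s).eq_empty_or_nonempty with h | h
  · have : μ s = 0 := measure_mono_null (by rw [frontier, h, sdiff_empty]; exact subset_closure)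
      (hs.addHaar_frontier μ)
    rw [Measure.restrict_eq_zero.mpr this, Measure.support_zero]
    exact convex_empty
  · suffices (μ.restrict s).support = closure s by rw [this]; exact hs.closure
    refine subset_antisymm (Measure.support_restrict_subset.trans inter_subset_left) ?_
    rw [← hs.closure_interior_eq_closure_of_nonempty_interior h]
    refine closure_minimal ?_ Measure.isClosed_support
    simpa [Measure.support_eq_univ] using Measure.interior_inter_support (μ := μ) (s := s)

lemma QuasiconcaveOn.nullMeasurable {f : E → ℝ} (hf : QuasiconcaveOn ℝ univ f) :
    NullMeasurable f μ :=
  measurable_of_Ici fun r =>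
    (sep_univ ▸ (hf r).nullMeasurableSet μ : NullMeasurableSet {x | r ≤ f x} μ)

end FiniteDimensional

lemma LogConcaveFun.quasiconcaveOn {m : ℕ} {ψ : (Fin m → ℝ) → ℝ} (hψ : LogConcaveFun ψ)
    (h0 : ∀ z, 0 ≤ ψ z) : QuasiconcaveOn ℝ univ ψ := by
  rintro r u ⟨-, hu⟩ v ⟨-, hv⟩ a b ha hb hab
  refine ⟨mem_univ _, ?_⟩
  rcases le_or_gt r 0 with hr | hr
  · exact hr.trans (h0 _)
  obtain rfl : b = 1 - a := by linarith
  calc r = r ^ a * r ^ (1 - a) := by rw [← Real.rpow_add hr, add_sub_cancel, Real.rpow_one]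
    _ ≤ ψ u ^ a * ψ v ^ (1 - a) := by gcongr; exact Real.rpow_nonneg (h0 u) a
    _ ≤ ψ (a • u + (1 - a) • v) := hψ u v a ha (by linarith)

lemma LogConcaveFun.convex_support_withDensity {m : ℕ} {ψ : (Fin m → ℝ) → ℝ}
    (hψ : LogConcaveFun ψ) (h0 : ∀ z, 0 ≤ ψ z) (μ : Measure (Fin m → ℝ)) [μ.IsAddHaarMeasure] :
    Convex ℝ (μ.withDensity fun z => ENNReal.ofReal (ψ z)).support := by
  have hq := hψ.quasiconcaveOn h0
  rw [Measure.support_withDensity μ (hq.nullMeasurable μ).aemeasurable.ennreal_ofReal]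
  have : Function.support (fun z => ENNReal.ofReal (ψ z)) = {z ∈ univ | 0 < ψ z} := by
    ext; simp
  rw [this]
  exact (hq.convex_gt 0).support_restrict μ

lemma exists_affineMap_state_eq {Ω : Type*} {n p : ℕ} (A : Matrix (Fin n) (Fin n) ℝ)
    (B : Matrix (Fin n) (Fin p) ℝ) (x0 : Fin n → ℝ) (w : ℕ → Ω → (Fin p → ℝ))
    (x : ℕ → Ω → (Fin n → ℝ)) (hx0 : ∀ ω, x 0 ω = x0)
    (hxrec : ∀ t ω, x (t + 1) ω = A *ᵥ x t ω + B *ᵥ w t ω) (t : ℕ) :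
    ∃ g : (Fin t → Fin p → ℝ) →ᵃ[ℝ] (Fin n → ℝ), ∀ ω, x t ω = g fun i => w i ω := by
  induction t with
  | zero => exact ⟨AffineMap.const ℝ _ x0, hx0⟩
  | succ t ih =>
    obtain ⟨g, hg⟩ := ih
    refine ⟨A.mulVecLin.toAffineMap.comp (g.comp (LinearMap.funLeft ℝ _ Fin.castSucc).toAffineMap)
      + (B.mulVecLin.comp (LinearMap.proj (Fin.last t))).toAffineMap, fun ω => ?_⟩
    rw [hxrec, hg]
    rfl

theorem fsr_set_convex_general
    {Ω : Type*} [MeasurableSpace Ω] (P : Measure Ω) [IsProbabilityMeasure P]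
    (n p : ℕ)
    (A : Matrix (Fin n) (Fin n) ℝ)
    (B : Matrix (Fin n) (Fin p) ℝ)
    (x0 : Fin n → ℝ)
    (w : ℕ → Ω → (Fin p → ℝ))
    (hwmeas : ∀ t, Measurable (w t))
    (hwindep : iIndepFun w P)
    (ψw : (Fin p → ℝ) → ℝ)
    (hψw0 : ∀ z, 0 ≤ ψw z)
    (hψwlc : LogConcaveFun ψw)
    (hwdens : ∀ t, Measure.map (w t) P
        = (volume : Measure (Fin p → ℝ)).withDensity (fun z => ENNReal.ofReal (ψw z)))
    (x : ℕ → Ω → (Fin n → ℝ))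
    (hx0 : ∀ ω, x 0 ω = x0)
    (hxrec : ∀ t ω, x (t + 1) ω = A *ᵥ x t ω + B *ᵥ w t ω) :
    ∀ τ : ℕ, 1 ≤ τ → Convex ℝ (measSupport (Measure.map (x τ) P)) := by
  intro τ _
  set μw := (volume : Measure (Fin p → ℝ)).withDensity fun z => ENNReal.ofReal (ψw z)
  have : IsProbabilityMeasure μw :=
    hwdens 0 ▸ Measure.isProbabilityMeasure_map (hwmeas 0).aemeasurable
  set W : Ω → Fin τ → Fin p → ℝ := fun ω i => w i ω
  have hW : P.map W = Measure.pi fun _ => μw := by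
    rw [(hwindep.precomp Fin.val_injective).map_fun_eq_pi_map (f := fun i : Fin τ => w i)
      fun i => (hwmeas i).aemeasurable]
    simp_rw [hwdens]
  obtain ⟨g, hg⟩ := exists_affineMap_state_eq A B x0 w x hx0 hxrec τ
  have hg_cont : Continuous g := g.continuous_of_finiteDimensional
  rw [show x τ = g ∘ W from funext hg, ← Measure.map_map hg_cont.measurable
    (measurable_pi_lambda _ fun i => hwmeas i), hW, measSupport_eq_support,
    Measure.support_map _ hg_cont, Measure.support_pi]
  have hμw : Convex ℝ μw.support := hψwlc.convex_support_withDensity hψw0 volume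
  exact ((convex_pi fun _ _ => hμw).affine_image g).closure

/-- **Convexity of the forward stochastic reach set.**
For the system `x[t+1] = A x[t] + B w[t]` with invertible `A`, initial state
`x̄₀`, and i.i.d. disturbances with a log-concave density `ψw`, the topological
support of the distribution of `x[τ]` is convex for every `τ ≥ 1`. -/
theorem fsr_set_convex
    {Ω : Type*} [MeasurableSpace Ω] (P : Measure Ω) [IsProbabilityMeasure P]
    (n p : ℕ)
    (A : Matrix (Fin n) (Fin n) ℝ) (hA : IsUnit A.det)
    (B : Matrix (Fin n) (Fin p) ℝ)
    (x0 : Fin n → ℝ)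
    (w : ℕ → Ω → (Fin p → ℝ))
    (hwmeas : ∀ t, Measurable (w t))
    (hwindep : iIndepFun w P)
    (ψw : (Fin p → ℝ) → ℝ)
    (hψw0 : ∀ z, 0 ≤ ψw z)
    (hψwlc : LogConcaveFun ψw)
    (hwdens : ∀ t, Measure.map (w t) P
        = (volume : Measure (Fin p → ℝ)).withDensity (fun z => ENNReal.ofReal (ψw z)))
    (x : ℕ → Ω → (Fin n → ℝ))
    (hx0 : ∀ ω, x 0 ω = x0)
    (hxrec : ∀ t ω, x (t + 1) ω = A *ᵥ x t ω + B *ᵥ w t ω) :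
    ∀ τ : ℕ, 1 ≤ τ → Convex ℝ (measSupport (Measure.map (x τ) P)) :=
  fsr_set_convex_general P n p A B x0 w hwmeas hwindep ψw hψw0 hψwlc hwdens x hx0 hxrec
end

section
/- The bivariate exponential density ψ_a(z₁, z₂) = λ_x λ_y e^{−λ_x z₁ − λ_y z₂} for z₁, z₂ ≥ 0 (and 0 otherwise), with λ_x, λ_y > 0, belongs to L¹(ℝ²) ∩ L²(ℝ²); moreover, for the double-integrator system x_G[t+1] = A x_G[t] + B a[t] on ℝ⁴ with A = I₂ ⊗ [[1, T_s],[0, 1]], B = I₂ ⊗ [T_s²/2, T_s]ᵀ, T_s > 0, fixed initial state x_G[0], and i.i.d. disturbances a[t] with density ψ_a, for every τ ≥ 2 the distribution of x_G[τ] is absolutely continuous with respect to Lebesgue measure on ℝ⁴ with a density in L¹(ℝ⁴) ∩ L²(ℝ⁴). -/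
/-!
Write `x[k+2] = A² x[k] + (A B a[k] + B a[k+1])`. The state `x[k]` is a function of
`a[0], …, a[k-1]`, hence independent of the pair `(a[k], a[k+1])`, so the law of `x[k+2]` is the
convolution of the law of `A B a[k] + B a[k+1]` with a probability measure. For the double
integrator the two-step reachability map `Φ (u, v) = A B u + B v` is a linear isomorphism
`ℝ² × ℝ² ≃ ℝ⁴`, so that law has, up to a constant, the density `(ψ_a ⊗ ψ_a) ∘ Φ⁻¹`, which is
square integrable because the exponential density is. Convolution with a probability measure
preserves square integrability of a density (Jensen, then translation invariance of Lebesgue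
measure), and the density of a probability measure is integrable anyway.
-/

open MeasureTheory Matrix ProbabilityTheory
open scoped ENNReal

theorem sq_lintegral_le_lintegral_sq {α : Type*} [MeasurableSpace α] (ν : Measure α)
    [IsProbabilityMeasure ν] {g : α → ℝ≥0∞} (hg : AEMeasurable g ν) :
    (∫⁻ z, g z ∂ν) ^ 2 ≤ ∫⁻ z, g z ^ 2 ∂ν := by
  have h := ENNReal.lintegral_mul_le_Lp_mul_Lq ν Real.HolderConjugate.two_two hg
    (aemeasurable_const (b := (1 : ℝ≥0∞)))
  simp only [Pi.mul_apply, mul_one, ENNReal.one_rpow, lintegral_const, measure_univ] at h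
  calc (∫⁻ z, g z ∂ν) ^ 2 ≤ ((∫⁻ z, g z ^ (2 : ℝ) ∂ν) ^ (1 / (2 : ℝ))) ^ 2 := by
        gcongr
    _ = ∫⁻ z, g z ^ 2 ∂ν := by
        rw [← ENNReal.rpow_natCast, ← ENNReal.rpow_mul]
        norm_num

theorem memLp_two_toReal_of_lintegral_sq_ne_top {α : Type*} [MeasurableSpace α] {μ : Measure α}
    {g : α → ℝ≥0∞} (hg : AEMeasurable g μ) (h : ∫⁻ x, g x ^ 2 ∂μ ≠ ∞) :
    MemLp (fun x => (g x).toReal) 2 μ := by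
  refine (memLp_two_iff_integrable_sq hg.ennreal_toReal.aestronglyMeasurable).2 ?_
  simpa [ENNReal.toReal_pow] using integrable_toReal_of_lintegral_ne_top (hg.pow_const 2) h

theorem MeasurableEquiv.map_withDensity {α β : Type*} [MeasurableSpace α] [MeasurableSpace β]
    (e : α ≃ᵐ β) (μ : Measure α) (f : α → ℝ≥0∞) :
    (μ.withDensity f).map e = (μ.map e).withDensity (f ∘ e.symm) := by
  ext s hs
  rw [e.map_apply, withDensity_apply _ (e.measurable hs), withDensity_apply _ hs,
    e.restrict_map, lintegral_map_equiv]
  simp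

theorem exists_map_continuousLinearEquiv_eq_smul {E F : Type*} [NormedAddCommGroup E]
    [NormedSpace ℝ E] [FiniteDimensional ℝ E] [MeasurableSpace E] [BorelSpace E]
    [NormedAddCommGroup F] [NormedSpace ℝ F] [FiniteDimensional ℝ F] [MeasurableSpace F]
    [BorelSpace F] (Φ : E ≃L[ℝ] F) (μ : Measure E) [μ.IsAddHaarMeasure] (ν : Measure F)
    [ν.IsAddHaarMeasure] : ∃ c : ℝ≥0∞, c ≠ 0 ∧ c ≠ ∞ ∧ μ.map Φ = c • ν :=
  ⟨Measure.addHaarScalarFactor (μ.map Φ) ν,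
    by simpa using (Measure.addHaarScalarFactor_pos_of_isAddHaarMeasure (μ.map Φ) ν).ne',
    ENNReal.coe_ne_top, Measure.isAddLeftInvariant_eq_smul _ _⟩

theorem withDensity_conv_eq {G : Type*} [AddCommGroup G] [MeasurableSpace G] [MeasurableAdd₂ G]
    [MeasurableSub₂ G] {μ : Measure G} [SFinite μ] [μ.IsAddRightInvariant] (ν : Measure G)
    [SFinite ν] {f : G → ℝ≥0∞} (hf : Measurable f) :
    μ.withDensity f ∗ ν = μ.withDensity fun y => ∫⁻ z, f (y - z) ∂ν := by
  refine Measure.ext_of_lintegral _ fun φ hφ => ?_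
  have hshift : ∀ z, ∫⁻ x, f x * φ (x + z) ∂μ = ∫⁻ y, f (y - z) * φ y ∂μ := fun z => by
    simpa using lintegral_add_right_eq_self (μ := μ) (fun y => f (y - z) * φ y) z
  calc ∫⁻ y, φ y ∂(μ.withDensity f ∗ ν)
      = ∫⁻ x, f x * ∫⁻ z, φ (x + z) ∂ν ∂μ := by
        rw [Measure.lintegral_conv hφ, lintegral_withDensity_eq_lintegral_mul _ hf (by fun_prop)]
        rfl
    _ = ∫⁻ x, ∫⁻ z, f x * φ (x + z) ∂ν ∂μ :=
        lintegral_congr fun x => (lintegral_const_mul _ (by fun_prop)).symm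
    _ = ∫⁻ z, ∫⁻ y, f (y - z) * φ y ∂μ ∂ν := by
        rw [lintegral_lintegral_swap (by fun_prop)]
        simp_rw [hshift]
    _ = ∫⁻ y, (∫⁻ z, f (y - z) ∂ν) * φ y ∂μ := by
        rw [lintegral_lintegral_swap (by fun_prop)]
        exact lintegral_congr fun y => lintegral_mul_const _ (by fun_prop)
    _ = ∫⁻ y, φ y ∂μ.withDensity fun y => ∫⁻ z, f (y - z) ∂ν := by
        rw [lintegral_withDensity_eq_lintegral_mul _ (by fun_prop) hφ]
        rfl

section SqIntegrableDensity

variable {E F : Type*} [MeasurableSpace E] [MeasurableSpace F]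

/-- Integrability of the density is left out: for finite `ρ` it is automatic. -/
def HasSqIntegrableDensity (ρ μ : Measure E) : Prop :=
  ∃ f : E → ℝ≥0∞, Measurable f ∧ ρ = μ.withDensity f ∧ ∫⁻ x, f x ^ 2 ∂μ ≠ ∞

theorem HasSqIntegrableDensity.exists_memLp {ρ μ : Measure E} [IsFiniteMeasure ρ]
    (h : HasSqIntegrableDensity ρ μ) :
    ∃ f : E → ℝ, (∀ y, 0 ≤ f y) ∧ ρ = μ.withDensity (fun y => ENNReal.ofReal (f y)) ∧
      MemLp f 1 μ ∧ MemLp f 2 μ := by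
  obtain ⟨g, hg, rfl, hg2⟩ := h
  have hg1 : ∫⁻ x, g x ∂μ ≠ ∞ := by
    simpa [withDensity_apply] using measure_ne_top (μ.withDensity g) Set.univ
  refine ⟨fun y => (g y).toReal, fun y => ENNReal.toReal_nonneg, ?_,
    memLp_one_iff_integrable.2 (integrable_toReal_of_lintegral_ne_top hg.aemeasurable hg1),
    memLp_two_toReal_of_lintegral_sq_ne_top hg.aemeasurable hg2⟩
  refine withDensity_congr_ae ?_
  filter_upwards [ae_lt_top hg hg1] with y hy
  rw [ENNReal.ofReal_toReal hy.ne]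

theorem HasSqIntegrableDensity.prod {ρ μ : Measure E} {ρ' μ' : Measure F} [SFinite μ]
    [SFinite μ'] (h : HasSqIntegrableDensity ρ μ) (h' : HasSqIntegrableDensity ρ' μ') :
    HasSqIntegrableDensity (ρ.prod ρ') (μ.prod μ') := by
  obtain ⟨f, hf, rfl, hf2⟩ := h
  obtain ⟨g, hg, rfl, hg2⟩ := h'
  refine ⟨fun p => f p.1 * g p.2, by fun_prop, prod_withDensity hf hg, ?_⟩
  simp_rw [mul_pow]
  rw [lintegral_prod_mul (f := fun x => f x ^ 2) (g := fun y => g y ^ 2) (by fun_prop)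
    (by fun_prop)]
  exact ENNReal.mul_ne_top hf2 hg2

theorem HasSqIntegrableDensity.map_measurableEquiv {ρ μ : Measure E} {ν : Measure F}
    (h : HasSqIntegrableDensity ρ μ) (e : E ≃ᵐ F) {c : ℝ≥0∞} (hc₀ : c ≠ 0) (hc : c ≠ ∞)
    (he : μ.map e = c • ν) : HasSqIntegrableDensity (ρ.map e) ν := by
  obtain ⟨f, hf, rfl, hf2⟩ := h
  have hchange : ∀ g : E → ℝ≥0∞, c * ∫⁻ y, g (e.symm y) ∂ν = ∫⁻ x, g x ∂μ := by
    intro g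
    rw [← smul_eq_mul, ← lintegral_smul_measure, ← he, lintegral_map_equiv]
    simp
  refine ⟨fun y => c * f (e.symm y), by fun_prop, ?_, ?_⟩
  · rw [e.map_withDensity, he, withDensity_smul_measure, ← withDensity_smul' _ _ hc]
    rfl
  · have hsq : c * ∫⁻ y, (c * f (e.symm y)) ^ 2 ∂ν = c ^ 2 * ∫⁻ x, f x ^ 2 ∂μ := by
      simp_rw [mul_pow]
      rw [lintegral_const_mul' _ _ (by simp [hc]), mul_left_comm, hchange (fun x => f x ^ 2)]
    intro htop
    rw [htop, ENNReal.mul_top hc₀] at hsq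
    exact ENNReal.mul_ne_top (ENNReal.pow_ne_top hc) hf2 hsq.symm

theorem HasSqIntegrableDensity.conv {G : Type*} [AddCommGroup G] [MeasurableSpace G]
    [MeasurableAdd₂ G] [MeasurableSub₂ G] {ρ μ : Measure G} [SFinite μ] [μ.IsAddRightInvariant]
    (h : HasSqIntegrableDensity ρ μ) (ν : Measure G) [IsProbabilityMeasure ν] :
    HasSqIntegrableDensity (ρ ∗ ν) μ := by
  obtain ⟨f, hf, rfl, hf2⟩ := h
  refine ⟨_, by fun_prop, withDensity_conv_eq ν hf, ne_top_of_le_ne_top hf2 ?_⟩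
  calc ∫⁻ y, (∫⁻ z, f (y - z) ∂ν) ^ 2 ∂μ
      ≤ ∫⁻ y, ∫⁻ z, f (y - z) ^ 2 ∂ν ∂μ :=
        lintegral_mono fun y => sq_lintegral_le_lintegral_sq ν (by fun_prop)
    _ = ∫⁻ x, f x ^ 2 ∂μ := by
        rw [lintegral_lintegral_swap (by fun_prop)]
        simp_rw [lintegral_sub_right_eq_self (fun x => f x ^ 2), lintegral_const, measure_univ,
          mul_one]

end SqIntegrableDensity

section Exponential

@[fun_prop]
theorem measurable_exponentialPDF (r : ℝ) : Measurable (exponentialPDF r) :=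
  (measurable_exponentialPDFReal r).ennreal_ofReal

theorem exponentialPDF_sq {r : ℝ} (hr : 0 ≤ r) (x : ℝ) :
    exponentialPDF r x ^ 2 = ENNReal.ofReal (r / 2) * exponentialPDF (2 * r) x := by
  rcases lt_or_ge x 0 with hx | hx
  · simp [exponentialPDF_of_neg hx]
  · rw [exponentialPDF_of_nonneg hx, exponentialPDF_of_nonneg hx, ← ENNReal.ofReal_pow
      (by positivity), ← ENNReal.ofReal_mul (by positivity), mul_pow, ← Real.exp_nat_mul]
    congr 1
    field_simp
    ring_nf

theorem lintegral_exponentialPDF_sq {r : ℝ} (hr : 0 < r) :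
    ∫⁻ x, exponentialPDF r x ^ 2 = ENNReal.ofReal (r / 2) := by
  simp_rw [exponentialPDF_sq hr.le]
  rw [lintegral_const_mul' _ _ ENNReal.ofReal_ne_top, lintegral_exponentialPDF_eq_one
    (by positivity), mul_one]

theorem lintegral_fin_two_mul {α : Type*} [MeasureSpace α] [SigmaFinite (volume : Measure α)]
    {f g : α → ℝ≥0∞} (hf : AEMeasurable f) (hg : AEMeasurable g) :
    ∫⁻ z : Fin 2 → α, f (z 0) * g (z 1) = (∫⁻ x, f x) * ∫⁻ x, g x := by
  have h := (volume_preserving_piFinTwo fun _ => α).lintegral_map_equiv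
    (fun p : α × α => f p.1 * g p.2)
  simp only [MeasurableEquiv.piFinTwo_apply] at h
  rw [← h, Measure.volume_eq_prod, lintegral_prod_mul hf hg]

theorem lintegral_exponentialPDF_mul_exponentialPDF {r s : ℝ} (hr : 0 < r) (hs : 0 < s) :
    ∫⁻ z : Fin 2 → ℝ, exponentialPDF r (z 0) * exponentialPDF s (z 1) = 1 := by
  rw [lintegral_fin_two_mul (by fun_prop) (by fun_prop), lintegral_exponentialPDF_eq_one hr,
    lintegral_exponentialPDF_eq_one hs, one_mul]

theorem lintegral_exponentialPDF_mul_exponentialPDF_sq {r s : ℝ} (hr : 0 < r) (hs : 0 < s) :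
    ∫⁻ z : Fin 2 → ℝ, (exponentialPDF r (z 0) * exponentialPDF s (z 1)) ^ 2
      = ENNReal.ofReal (r / 2) * ENNReal.ofReal (s / 2) := by
  simp_rw [mul_pow]
  rw [lintegral_fin_two_mul (f := fun x => exponentialPDF r x ^ 2)
    (g := fun x => exponentialPDF s x ^ 2) (by fun_prop) (by fun_prop),
    lintegral_exponentialPDF_sq hr, lintegral_exponentialPDF_sq hs]

end Exponential

section NoiseDriven

variable {Ω β γ : Type*} [mβ : MeasurableSpace β] [MeasurableSpace γ]

theorem measurable_biSup_comap_of_mem {ι : Type*} (a : ι → Ω → β) {S : Set ι} {i : ι}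
    (hi : i ∈ S) : Measurable[⨆ j ∈ S, mβ.comap (a j)] (a i) :=
  (comap_measurable (a i)).mono (le_iSup₂ (f := fun j (_ : j ∈ S) => mβ.comap (a j)) i hi) le_rfl

theorem ProbabilityTheory.iIndepFun.indepFun_of_measurable_iSup {δ ι : Type*} [MeasurableSpace Ω]
    [MeasurableSpace δ] {P : Measure Ω} {a : ι → Ω → β}
    (h : iIndepFun a P) (ha : ∀ i, Measurable (a i)) {S T : Set ι} (hST : Disjoint S T)
    {X : Ω → γ} {Y : Ω → δ} (hX : Measurable[⨆ i ∈ S, mβ.comap (a i)] X)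
    (hY : Measurable[⨆ i ∈ T, mβ.comap (a i)] Y) : IndepFun X Y P := by
  rw [IndepFun_iff_Indep]
  exact indep_of_indep_of_le (indep_iSup_of_disjoint (fun i => (ha i).comap_le)
    ((iIndepFun_iff_iIndep _ _ _).1 h) hST) hX.comap_le hY.comap_le

theorem measurable_iSup_comap_of_recursion {a : ℕ → Ω → β} {x : ℕ → Ω → γ}
    {g : ℕ → γ → β → γ} (hg : ∀ t, Measurable (Function.uncurry (g t))) {x₀ : γ}
    (hx0 : ∀ ω, x 0 ω = x₀) (hrec : ∀ t ω, x (t + 1) ω = g t (x t ω) (a t ω)) (t : ℕ) :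
    Measurable[⨆ i ∈ Set.Iio t, mβ.comap (a i)] (x t) := by
  induction t with
  | zero => simp [funext hx0]
  | succ t ih =>
    have hle : ⨆ i ∈ Set.Iio t, mβ.comap (a i) ≤ ⨆ i ∈ Set.Iio (t + 1), mβ.comap (a i) :=
      biSup_mono fun i (hi : i < t) => Nat.lt_succ_of_lt hi
    rw [show x (t + 1) = fun ω => Function.uncurry (g t) (x t ω, a t ω) from funext (hrec t)]
    exact (hg t).comp ((ih.mono hle le_rfl).prodMk
      (measurable_biSup_comap_of_mem a (Nat.lt_succ_self t)))

end NoiseDriven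

section LinearSystem

variable {m n : ℕ}

def twoStepReachMap (A : Matrix (Fin n) (Fin n) ℝ) (B : Matrix (Fin n) (Fin m) ℝ) :
    (Fin m → ℝ) × (Fin m → ℝ) →ₗ[ℝ] Fin n → ℝ :=
  (A * B).mulVecLin ∘ₗ LinearMap.fst ℝ _ _ + B.mulVecLin ∘ₗ LinearMap.snd ℝ _ _

theorem twoStepReachMap_apply (A : Matrix (Fin n) (Fin n) ℝ) (B : Matrix (Fin n) (Fin m) ℝ)
    (p : (Fin m → ℝ) × (Fin m → ℝ)) : twoStepReachMap A B p = (A * B) *ᵥ p.1 + B *ᵥ p.2 :=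
  rfl

variable {Ω : Type*} [MeasurableSpace Ω] {P : Measure Ω}

theorem hasSqIntegrableDensity_map_twoStepReachMap (A : Matrix (Fin n) (Fin n) ℝ)
    (B : Matrix (Fin n) (Fin m) ℝ) (hAB : Function.Bijective (twoStepReachMap A B))
    {a : ℕ → Ω → Fin m → ℝ} (ha : ∀ t, Measurable (a t)) (hindep : iIndepFun a P)
    (hdens : ∀ t, HasSqIntegrableDensity (P.map (a t)) volume) {i j : ℕ} (hij : i ≠ j) :
    HasSqIntegrableDensity (P.map fun ω => twoStepReachMap A B (a i ω, a j ω)) volume := by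
  have := hindep.isProbabilityMeasure
  let Φ := (LinearEquiv.ofBijective _ hAB).toContinuousLinearEquiv
  have hpair : HasSqIntegrableDensity (P.map fun ω => (a i ω, a j ω)) (volume.prod volume) := by
    rw [(indepFun_iff_map_prod_eq_prod_map_map (ha i).aemeasurable
      (ha j).aemeasurable).1 (hindep.indepFun hij)]
    exact (hdens i).prod (hdens j)
  let μ₂ : Measure ((Fin m → ℝ) × (Fin m → ℝ)) := volume.prod volume
  have : μ₂.IsAddHaarMeasure := Measure.prod.instIsAddHaarMeasure _ _
  obtain ⟨c, hc₀, hc, hΦ⟩ := exists_map_continuousLinearEquiv_eq_smul Φ μ₂ volume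
  have hmap := hpair.map_measurableEquiv Φ.toHomeomorph.toMeasurableEquiv hc₀ hc hΦ
  rwa [Measure.map_map Φ.toHomeomorph.toMeasurableEquiv.measurable ((ha i).prodMk (ha j))] at hmap

theorem hasSqIntegrableDensity_map_linearSystem (A : Matrix (Fin n) (Fin n) ℝ)
    (B : Matrix (Fin n) (Fin m) ℝ) (hAB : Function.Bijective (twoStepReachMap A B))
    {a : ℕ → Ω → Fin m → ℝ} (ha : ∀ t, Measurable (a t)) (hindep : iIndepFun a P)
    (hdens : ∀ t, HasSqIntegrableDensity (P.map (a t)) volume)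
    {x : ℕ → Ω → Fin n → ℝ} {x₀ : Fin n → ℝ} (hx0 : ∀ ω, x 0 ω = x₀)
    (hrec : ∀ t ω, x (t + 1) ω = A *ᵥ x t ω + B *ᵥ a t ω) (k : ℕ) :
    HasSqIntegrableDensity (P.map (x (k + 2))) volume := by
  have := hindep.isProbabilityMeasure
  let S : Ω → Fin n → ℝ := fun ω => twoStepReachMap A B (a k ω, a (k + 1) ω)
  let V : Ω → Fin n → ℝ := fun ω => (A * A) *ᵥ x k ω
  have hsplit : x (k + 2) = S + V := by
    funext ω
    simp only [Pi.add_apply, hrec, mulVec_add, mulVec_mulVec, S, V, twoStepReachMap_apply]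
    abel
  have hxk : Measurable[⨆ i ∈ Set.Iio k, MeasurableSpace.comap (a i) inferInstance] (x k) :=
    measurable_iSup_comap_of_recursion (g := fun _ v u => A *ᵥ v + B *ᵥ u)
      (fun _ => by fun_prop) hx0 hrec k
  have hreach : Measurable (twoStepReachMap A B) :=
    (twoStepReachMap A B).continuous_of_finiteDimensional.measurable
  have hAA : Measurable fun v : Fin n → ℝ => (A * A) *ᵥ v := by fun_prop
  have hV : Measurable V := hAA.comp (hxk.mono (iSup₂_le fun i _ => (ha i).comap_le) le_rfl)
  have hindepSV : IndepFun S V P :=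
    hindep.indepFun_of_measurable_iSup ha (S := {k, k + 1}) (T := Set.Iio k) (by simp)
      (hreach.comp ((measurable_biSup_comap_of_mem a (by simp)).prodMk
        (measurable_biSup_comap_of_mem a (by simp)))) (hAA.comp hxk)
  have : IsProbabilityMeasure (P.map V) := Measure.isProbabilityMeasure_map hV.aemeasurable
  have hS : Measurable S := hreach.comp ((ha k).prodMk (ha (k + 1)))
  rw [hsplit, hindepSV.map_add_eq_map_conv_map hS hV]
  exact (hasSqIntegrableDensity_map_twoStepReachMap A B hAB ha hindep hdens
    (Nat.ne_add_one k)).conv _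

end LinearSystem

theorem twoStepReachMap_doubleIntegrator_bijective {Ts : ℝ} (hTs : Ts ≠ 0) :
    Function.Bijective (twoStepReachMap !![1, Ts, 0, 0; 0, 1, 0, 0; 0, 0, 1, Ts; 0, 0, 0, 1]
      !![Ts ^ 2 / 2, 0; Ts, 0; 0, Ts ^ 2 / 2; 0, Ts]) := by
  -- the two rows of one axis; the block `[[3 Ts²/2, Ts²/2], [Ts, Ts]]` has determinant `Ts³`
  have key : ∀ p q : ℝ, (Ts ^ 2 / 2 + Ts * Ts) * p + Ts ^ 2 / 2 * q = 0 →
      Ts * p + Ts * q = 0 → p = 0 ∧ q = 0 := by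
    intro p q hpq hpq'
    have hp : p = 0 := by
      simpa [hTs] using (by linear_combination hpq - Ts / 2 * hpq' : Ts ^ 2 * p = 0)
    exact ⟨hp, by simpa [hp, hTs] using hpq'⟩
  have hinj : Function.Injective (twoStepReachMap
      !![1, Ts, 0, 0; 0, 1, 0, 0; 0, 0, 1, Ts; 0, 0, 0, 1]
      !![Ts ^ 2 / 2, 0; Ts, 0; 0, Ts ^ 2 / 2; 0, Ts]) := by
    rw [← LinearMap.ker_eq_bot, LinearMap.ker_eq_bot']
    rintro ⟨u, v⟩ h
    have h0 := congrFun h 0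
    have h1 := congrFun h 1
    have h2 := congrFun h 2
    have h3 := congrFun h 3
    simp [twoStepReachMap_apply, dotProduct, Fin.sum_univ_two] at h0 h1 h2 h3
    obtain ⟨hu0, hv0⟩ := key _ _ h0 h1
    obtain ⟨hu1, hv1⟩ := key _ _ h2 h3
    ext i <;> fin_cases i <;> simp [hu0, hv0, hu1, hv1]
  exact ⟨hinj, (LinearMap.injective_iff_surjective_of_finrank_eq_finrank (by simp)).1 hinj⟩

/-- **Square-integrability of the bivariate exponential density and of the
forward stochastic reach probability density of the double integrator.**
The density `ψ_a(z₁,z₂) = λx λy e^{−λx z₁ − λy z₂}` (on the nonnegative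
quadrant, `0` otherwise) is in `L¹(ℝ²) ∩ L²(ℝ²)`, and for the double
integrator `x_G[t+1] = A x_G[t] + B a[t]` driven by i.i.d. disturbances with
density `ψ_a`, the distribution of `x_G[τ]` is, for every `τ ≥ 2`, absolutely
continuous with a density in `L¹(ℝ⁴) ∩ L²(ℝ⁴)`. -/
theorem fsrpd_double_integrator_L1_L2
    {Ω : Type*} [MeasurableSpace Ω] (P : Measure Ω) [IsProbabilityMeasure P]
    (Ts : ℝ) (hTs : 0 < Ts)
    (A : Matrix (Fin 4) (Fin 4) ℝ)
    (hA : A = !![1, Ts, 0, 0; 0, 1, 0, 0; 0, 0, 1, Ts; 0, 0, 0, 1])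
    (B : Matrix (Fin 4) (Fin 2) ℝ)
    (hB : B = !![Ts ^ 2 / 2, 0; Ts, 0; 0, Ts ^ 2 / 2; 0, Ts])
    (xG0 : Fin 4 → ℝ)
    (lx ly : ℝ) (hlx : 0 < lx) (hly : 0 < ly)
    (ψa : (Fin 2 → ℝ) → ℝ)
    (hψa : ∀ z, ψa z = if 0 ≤ z 0 ∧ 0 ≤ z 1 then
        lx * ly * Real.exp (-(lx * z 0) - ly * z 1) else 0)
    (a : ℕ → Ω → (Fin 2 → ℝ))
    (hameas : ∀ t, Measurable (a t))
    (haindep : iIndepFun a P)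
    (hadens : ∀ t, Measure.map (a t) P
        = (volume : Measure (Fin 2 → ℝ)).withDensity (fun z => ENNReal.ofReal (ψa z)))
    (x : ℕ → Ω → (Fin 4 → ℝ))
    (hx0 : ∀ ω, x 0 ω = xG0)
    (hxrec : ∀ t ω, x (t + 1) ω = A *ᵥ x t ω + B *ᵥ a t ω) :
    (MemLp ψa 1 (volume : Measure (Fin 2 → ℝ))
        ∧ MemLp ψa 2 (volume : Measure (Fin 2 → ℝ)))
      ∧ ∀ τ : ℕ, 2 ≤ τ → ∃ f : (Fin 4 → ℝ) → ℝ,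
          (∀ y, 0 ≤ f y) ∧
          Measure.map (x τ) P
            = (volume : Measure (Fin 4 → ℝ)).withDensity (fun y => ENNReal.ofReal (f y)) ∧
          MemLp f 1 (volume : Measure (Fin 4 → ℝ))
            ∧ MemLp f 2 (volume : Measure (Fin 4 → ℝ)) := by
  have hψ : ∀ z, ENNReal.ofReal (ψa z) = exponentialPDF lx (z 0) * exponentialPDF ly (z 1) := by
    intro z
    rw [hψa, exponentialPDF_eq, exponentialPDF_eq,
      ← ENNReal.ofReal_mul (by split_ifs <;> positivity)]
    congr 1
    split_ifs <;> simp_all [sub_eq_add_neg, Real.exp_add]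
    ring
  have hψm : Measurable fun z => ENNReal.ofReal (ψa z) := by
    simp_rw [hψ]
    fun_prop
  have hψ1 : ∫⁻ z, ENNReal.ofReal (ψa z) ≠ ∞ := by
    simp [hψ, lintegral_exponentialPDF_mul_exponentialPDF hlx hly]
  have hψ2 : ∫⁻ z, ENNReal.ofReal (ψa z) ^ 2 ≠ ∞ := by
    simp [hψ, lintegral_exponentialPDF_mul_exponentialPDF_sq hlx hly, ENNReal.mul_eq_top]
  have hψ_toReal : ψa = fun z => (ENNReal.ofReal (ψa z)).toReal :=
    funext fun z => (ENNReal.toReal_ofReal (by rw [hψa]; split_ifs <;> positivity)).symm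
  refine ⟨⟨?_, ?_⟩, fun τ hτ => ?_⟩
  · rw [hψ_toReal]
    exact memLp_one_iff_integrable.2 (integrable_toReal_of_lintegral_ne_top hψm.aemeasurable hψ1)
  · rw [hψ_toReal]
    exact memLp_two_toReal_of_lintegral_sq_ne_top hψm.aemeasurable hψ2
  obtain ⟨k, rfl⟩ := Nat.exists_eq_add_of_le' hτ
  subst hA hB
  exact (hasSqIntegrableDensity_map_linearSystem _ _
    (twoStepReachMap_doubleIntegrator_bijective hTs.ne') hameas haindep
    (fun t => ⟨_, hψm, hadens t, hψ2⟩) hx0 hxrec k).exists_memLp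
end
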